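/- The quotient of two finite Blaschke products of the same degree has a critical point on the unit circle: let n ≥ 1 and let A(z) = μ·∏_{k=1}^n (z − a_k)/(1 − conj(a_k)·z) and B(z) = λ·∏_{k=1}^n (z − b_k)/(1 − conj(b_k)·z) be finite Blaschke products of degree n with a_1, …, a_n, b_1, …, b_n ∈ 𝔻 and |λ| = |μ| = 1. Then there exists z ∈ ℂ with |z| = 1 such that A'(z)·B(z) − A(z)·B'(z) = 0; equivalently, the rational function R = A/B satisfies R'(e^{iθ}) = 0 for some θ ∈ [0, 2π). -/

import Mathlib

/-!
On the unit circle the logarithmic derivative of a Blaschke factor is a Poisson kernel: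
`z · b'(z) / b(z) = (1 - |a|²) / |z - a|²`. Hence `z A'(z) = A(z) · Σₖ P(aₖ, z)` and
`z B'(z) = B(z) · Σₖ P(bₖ, z)` there. Both sums of Poisson kernels have circle average `n`, so
by the mean value theorem for integrals they agree at some `z` on the circle, and at that point
`z (A'B - AB') = AB (Σₖ P(aₖ, z) - Σₖ P(bₖ, z)) = 0`.
-/

open Complex ComplexConjugate Metric Real

section CircleAverage

variable {c w : ℂ} {R : ℝ}

theorem continuousOn_poissonKernel_sphere (hw : w ∈ ball c R) :
    ContinuousOn (poissonKernel c w) (sphere c |R|) := by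
  rw [poissonKernel_eq_re_herglotzRieszKernel]
  exact continuous_re.comp_continuousOn (continuousOn_herglotzRieszKernel_sphere hw)

theorem circleAverage_poissonKernel (hw : w ∈ ball c R) :
    circleAverage (poissonKernel c w) c R = 1 := by
  have h := (diffContOnCl_const (c := (1 : ℂ))).circleAverage_poissonKernel_smul hw
  apply ofReal_injective
  rw [ofReal_one, ← h, ← ofRealCLM_apply, ← ofRealCLM.circleAverage_comp_comm
    (continuousOn_poissonKernel_sphere hw).circleIntegrable']
  congr 1
  funext z
  simp

theorem continuousOn_sum_poissonKernel_sphere {ι : Type*} [Fintype ι] {a : ι → ℂ}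
    (ha : ∀ i, a i ∈ ball c R) :
    ContinuousOn (fun z => ∑ i, poissonKernel c (a i) z) (sphere c |R|) :=
  continuousOn_finsetSum _ fun i _ => continuousOn_poissonKernel_sphere (ha i)

theorem circleAverage_sum_poissonKernel {ι : Type*} [Fintype ι] {a : ι → ℂ}
    (ha : ∀ i, a i ∈ ball c R) :
    circleAverage (fun z => ∑ i, poissonKernel c (a i) z) c R = Fintype.card ι := by
  rw [circleAverage_fun_sum fun i _ => (continuousOn_poissonKernel_sphere (ha i)).circleIntegrable']
  simp [circleAverage_poissonKernel, ha]

theorem exists_mem_sphere_eq_circleAverage {f : ℂ → ℝ} (hf : ContinuousOn f (sphere c |R|)) :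
    ∃ z ∈ sphere c |R|, f z = circleAverage f c R := by
  obtain ⟨θ, -, hθ⟩ := exists_eq_interval_average (a := 0) (b := 2 * π) two_pi_pos.ne
    (hf.comp_continuous (continuous_circleMap c R) (circleMap_mem_sphere' c R)).continuousOn
  refine ⟨circleMap c R θ, circleMap_mem_sphere' c R θ, ?_⟩
  rwa [circleAverage_eq_intervalAverage]

theorem exists_mem_sphere_eq_of_circleAverage_eq {f g : ℂ → ℝ}
    (hf : ContinuousOn f (sphere c |R|)) (hg : ContinuousOn g (sphere c |R|))
    (h : circleAverage f c R = circleAverage g c R) :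
    ∃ z ∈ sphere c |R|, f z = g z := by
  obtain ⟨z, hz, hfg⟩ := exists_mem_sphere_eq_circleAverage (hf.sub hg)
  rw [Pi.sub_apply, circleAverage_sub hf.circleIntegrable' hg.circleIntegrable', h, sub_self] at hfg
  exact ⟨z, hz, sub_eq_zero.1 hfg⟩

end CircleAverage

noncomputable def blaschkeFactor (a z : ℂ) : ℂ := (z - a) / (1 - conj a * z)

section BlaschkeFactor

variable {a z : ℂ}

theorem one_sub_conj_mul_ne_zero (hz : ‖z‖ = 1) (ha : a ≠ z) : 1 - conj a * z ≠ 0 := by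
  intro h
  have hconj : z * conj z = 1 := by rw [mul_conj', hz]; norm_num
  apply ha
  have : conj a = conj z := by linear_combination (-conj a) * hconj - conj z * h
  simpa using congrArg conj this

theorem hasDerivAt_blaschkeFactor (hden : 1 - conj a * z ≠ 0) :
    HasDerivAt (blaschkeFactor a) ((1 - conj a * a) / (1 - conj a * z) ^ 2) z := by
  have hnum : HasDerivAt (fun w : ℂ => w - a) 1 z := (hasDerivAt_id z).sub_const a
  have hden' : HasDerivAt (fun w : ℂ => 1 - conj a * w) (-conj a) z := by
    simpa using ((hasDerivAt_id z).const_mul (conj a)).const_sub 1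
  exact (hnum.fun_div hden' hden).congr_deriv (by ring)

theorem blaschkeFactor_ne_zero (hz : ‖z‖ = 1) (ha : a ≠ z) : blaschkeFactor a z ≠ 0 :=
  div_ne_zero (sub_ne_zero.2 ha.symm) (one_sub_conj_mul_ne_zero hz ha)

theorem mul_logDeriv_blaschkeFactor (hz : ‖z‖ = 1) (ha : a ≠ z) :
    z * logDeriv (blaschkeFactor a) z = poissonKernel 0 a z := by
  have hconj : z * conj z = 1 := by rw [mul_conj', hz]; norm_num
  have hfactor : 1 - conj a * z = z * conj (z - a) := by
    rw [map_sub]; linear_combination -hconj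
  have hz0 : z ≠ 0 := by rintro rfl; simp at hz
  have hza : conj (z - a) ≠ 0 := (map_ne_zero _).2 (sub_ne_zero.2 ha.symm)
  rw [logDeriv_apply, (hasDerivAt_blaschkeFactor (one_sub_conj_mul_ne_zero hz ha)).deriv,
    poissonKernel_def, blaschkeFactor]
  simp only [sub_zero, hz]
  push_cast
  rw [← mul_conj', ← mul_conj', hfactor]
  field_simp

theorem mul_deriv_const_mul_prod_blaschkeFactor {ι : Type*} [Fintype ι] {a : ι → ℂ}
    (mu : ℂ) (hz : ‖z‖ = 1) (ha : ∀ i, a i ≠ z) :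
    z * deriv (fun w => mu * ∏ i, blaschkeFactor (a i) w) z =
      (mu * ∏ i, blaschkeFactor (a i) z) * ∑ i, poissonKernel 0 (a i) z := by
  have hne : ∀ i ∈ Finset.univ, blaschkeFactor (a i) z ≠ 0 :=
    fun i _ => blaschkeFactor_ne_zero hz (ha i)
  have hdiff : ∀ i ∈ Finset.univ, DifferentiableAt ℂ (blaschkeFactor (a i)) z :=
    fun i _ => (hasDerivAt_blaschkeFactor (one_sub_conj_mul_ne_zero hz (ha i))).differentiableAt
  have hlog := logDeriv_prod hne hdiff
  rw [logDeriv_apply, div_eq_iff (Finset.prod_ne_zero_iff.2 hne)] at hlog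
  rw [deriv_const_mul_field, hlog]
  simp_rw [ofReal_sum, ← mul_logDeriv_blaschkeFactor hz (ha _), ← Finset.mul_sum]
  ring

end BlaschkeFactor

theorem blaschke_quotient_critical_point_general (n : ℕ)
    (a b : Fin n → ℂ) (ha : ∀ k, ‖a k‖ < 1) (hb : ∀ k, ‖b k‖ < 1)
    (mu lam : ℂ)
    (A B : ℂ → ℂ)
    (hA : A = fun z => mu * ∏ k, (z - a k) / (1 - (starRingEnd ℂ) (a k) * z))
    (hB : B = fun z => lam * ∏ k, (z - b k) / (1 - (starRingEnd ℂ) (b k) * z)) :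
    ∃ z : ℂ, ‖z‖ = 1 ∧ deriv A z * B z - A z * deriv B z = 0 := by
  replace hA : A = fun z => mu * ∏ k, blaschkeFactor (a k) z := hA
  replace hB : B = fun z => lam * ∏ k, blaschkeFactor (b k) z := hB
  subst hA hB
  replace ha : ∀ k, a k ∈ ball 0 1 := by simpa using ha
  replace hb : ∀ k, b k ∈ ball 0 1 := by simpa using hb
  obtain ⟨z, hz, hS⟩ := exists_mem_sphere_eq_of_circleAverage_eq
    (continuousOn_sum_poissonKernel_sphere ha) (continuousOn_sum_poissonKernel_sphere hb)
    (by rw [circleAverage_sum_poissonKernel ha, circleAverage_sum_poissonKernel hb])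
  rw [abs_one, mem_sphere_zero_iff_norm] at hz
  have hne : ∀ c ∈ ball (0 : ℂ) 1, c ≠ z := fun c hc h => by simp_all
  have hz0 : z ≠ 0 := norm_ne_zero_iff.1 (by simp [hz])
  refine ⟨z, hz, (mul_eq_zero.1 ?_).resolve_left hz0⟩
  linear_combination
    (lam * ∏ k, blaschkeFactor (b k) z) *
        mul_deriv_const_mul_prod_blaschkeFactor mu hz (fun k => hne _ (ha k)) -
      (mu * ∏ k, blaschkeFactor (a k) z) *
        mul_deriv_const_mul_prod_blaschkeFactor lam hz (fun k => hne _ (hb k)) +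
      (mu * ∏ k, blaschkeFactor (a k) z) * (lam * ∏ k, blaschkeFactor (b k) z) *
        congrArg ofReal hS

/-- The quotient of two finite Blaschke products of the same degree `n` has a
critical point on the unit circle: `A'·B − A·B'` vanishes somewhere on `𝕋`. -/
theorem blaschke_quotient_critical_point (n : ℕ) (hn : 1 ≤ n)
    (a b : Fin n → ℂ) (ha : ∀ k, ‖a k‖ < 1) (hb : ∀ k, ‖b k‖ < 1)
    (mu lam : ℂ) (hmu : ‖mu‖ = 1) (hlam : ‖lam‖ = 1)
    (A B : ℂ → ℂ)
    (hA : A = fun z => mu * ∏ k, (z - a k) / (1 - (starRingEnd ℂ) (a k) * z))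
    (hB : B = fun z => lam * ∏ k, (z - b k) / (1 - (starRingEnd ℂ) (b k) * z)) :
    ∃ z : ℂ, ‖z‖ = 1 ∧ deriv A z * B z - A z * deriv B z = 0 :=
  blaschke_quotient_critical_point_general n a b ha hb mu lam A B hA hB
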